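/- arXiv:1109.5987 — 3 statements merged into one kernel-verified Lean document; each statement's English description precedes it below -/
import Mathlib

section
/- Let H be a finite-dimensional complex inner product space, N ≥ 1, U : Fin N → (H →ₗ H) a family of unitary operators, M ≥ 1, i : Fin M → Fin N a sequence of indices, and for each m ∈ Fin M let σ_m be a permutation of Fin N with σ_m(0) = i_m. Define the stage operators A_m = P_{σ_m}⁻¹ ∘ (U₀ ⊗ ⋯ ⊗ U_{N−1}) ∘ P_{σ_m} on H^{⊗N}. Then for all ψ, v ∈ H there exists a family w : Fin N → H with w₀ = U_{i_{M−1}} ∘ ⋯ ∘ U_{i_1} ∘ U_{i_0} ψ such that (A_{M−1} ∘ ⋯ ∘ A_1 ∘ A_0)(ψ ⊗ v ⊗ ⋯ ⊗ v) = w₀ ⊗ w₁ ⊗ ⋯ ⊗ w_{N−1}. In particular, the output is a pure (unentangled) tensor whose slot-0 factor is the programmed product U_{i_{M−1}}⋯U_{i_0} ψ. -/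
/-- The stage operator `A_σ = P_σ⁻¹ ∘ (U₀ ⊗ ⋯ ⊗ U_{N-1}) ∘ P_σ` on the `N`-fold tensor
power `H^{⊗N}`, where `P_σ` is realized as `PiTensorProduct.reindex`. -/
noncomputable def stageOp {H : Type*} [NormedAddCommGroup H] [InnerProductSpace ℂ H]
    {N : ℕ} (U : Fin N → (H →ₗ[ℂ] H)) (σ : Equiv.Perm (Fin N)) :
    PiTensorProduct ℂ (fun _ : Fin N => H) →ₗ[ℂ] PiTensorProduct ℂ (fun _ : Fin N => H) :=
  (PiTensorProduct.reindex ℂ (fun _ : Fin N => H) σ).symm.toLinearMap ∘ₗ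
    PiTensorProduct.map U ∘ₗ
    (PiTensorProduct.reindex ℂ (fun _ : Fin N => H) σ).toLinearMap

/-!
On a pure tensor the stage operator `A_σ` acts slotwise: slot `j` receives `U (σ j)`.
Hence every stage maps pure tensors to pure tensors, and slot `0` of stage `m` is hit by
`U (σ_m 0) = U i_m`, so slot `0` carries `U i_{M-1} ⋯ U i_0 ψ` at the end.
-/

theorem LinearMap.foldl_comp_apply {R V ι : Type*} [Semiring R] [AddCommMonoid V] [Module R V]
    (A : ι → V →ₗ[R] V) (l : List ι) (c : V →ₗ[R] V) (x : V) :
    l.foldl (fun acc m => A m ∘ₗ acc) c x = l.foldl (fun y m => A m y) (c x) :=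
  (List.foldl_hom (fun c : V →ₗ[R] V => c x) fun _ _ => rfl).symm

theorem List.foldl_slotwise_apply {ι κ X : Type*} (F : ι → κ → X → X) (l : List ι)
    (f : κ → X) (k : κ) :
    l.foldl (fun g m j => F m j (g j)) f k = l.foldl (fun y m => F m k y) (f k) :=
  (List.foldl_hom (fun g : κ → X => g k) fun _ _ => rfl).symm

section StageOp

variable {H : Type*} [NormedAddCommGroup H] [InnerProductSpace ℂ H] {N : ℕ}
  (U : Fin N → (H →ₗ[ℂ] H))

theorem stageOp_tprod (σ : Equiv.Perm (Fin N)) (f : Fin N → H) :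
    stageOp U σ (PiTensorProduct.tprod ℂ f) =
      PiTensorProduct.tprod ℂ fun j => U (σ j) (f j) := by
  simp [stageOp]

theorem foldl_stageOp_tprod {ι : Type*} (σ : ι → Equiv.Perm (Fin N)) (l : List ι)
    (f : Fin N → H) :
    l.foldl (fun t m => stageOp U (σ m) t) (PiTensorProduct.tprod ℂ f) =
      PiTensorProduct.tprod ℂ (l.foldl (fun g m j => U (σ m j) (g j)) f) :=
  List.foldl_hom (PiTensorProduct.tprod ℂ) fun g m => stageOp_tprod U (σ m) g

end StageOp

theorem staged_circuit_output_general {H : Type*} [NormedAddCommGroup H] [InnerProductSpace ℂ H]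
    (N : ℕ) [NeZero N] (M : ℕ)
    (U : Fin N → (H →ₗ[ℂ] H))
    (i : Fin M → Fin N) (σ : Fin M → Equiv.Perm (Fin N)) (hσ : ∀ m, σ m 0 = i m)
    (ψ v : H) :
    ∃ w : Fin N → H,
      w 0 = ((List.finRange M).foldl (fun acc m => U (i m) ∘ₗ acc) LinearMap.id) ψ ∧
      ((List.finRange M).foldl (fun acc m => stageOp U (σ m) ∘ₗ acc) LinearMap.id)
          (PiTensorProduct.tprod ℂ (fun j : Fin N => if j = 0 then ψ else v)) =
        PiTensorProduct.tprod ℂ w := by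
  refine ⟨(List.finRange M).foldl (fun g m j => U (σ m j) (g j))
    (fun j => if j = 0 then ψ else v), ?_, ?_⟩
  · rw [List.foldl_slotwise_apply, LinearMap.foldl_comp_apply]
    simp only [hσ, LinearMap.id_apply, if_pos]
  · rw [LinearMap.foldl_comp_apply, LinearMap.id_apply, foldl_stageOp_tprod]

/-- Correctness of the `M`-stage circuit for Task 1: if `σ_m 0 = i_m` for every stage `m`,
then applying `A_{M-1} ∘ ⋯ ∘ A_1 ∘ A_0` (with `A_m = P_{σ_m}⁻¹ ∘ (U₀ ⊗ ⋯ ⊗ U_{N-1}) ∘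
P_{σ_m}`) to the pure tensor `ψ ⊗ v ⊗ ⋯ ⊗ v` yields a pure tensor `w₀ ⊗ ⋯ ⊗ w_{N-1}`
whose slot-`0` factor is the programmed product `w₀ = U_{i_{M-1}} ∘ ⋯ ∘ U_{i_1} ∘ U_{i_0} ψ`. -/
theorem staged_circuit_output {H : Type*} [NormedAddCommGroup H] [InnerProductSpace ℂ H]
    [FiniteDimensional ℂ H] (N : ℕ) [NeZero N] (M : ℕ) (hM : 1 ≤ M)
    (U : Fin N → (H →ₗ[ℂ] H)) (hU : ∀ j, U j ∈ unitary (H →ₗ[ℂ] H))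
    (i : Fin M → Fin N) (σ : Fin M → Equiv.Perm (Fin N)) (hσ : ∀ m, σ m 0 = i m)
    (ψ v : H) :
    ∃ w : Fin N → H,
      w 0 = ((List.finRange M).foldl (fun acc m => U (i m) ∘ₗ acc) LinearMap.id) ψ ∧
      ((List.finRange M).foldl (fun acc m => stageOp U (σ m) ∘ₗ acc) LinearMap.id)
          (PiTensorProduct.tprod ℂ (fun j : Fin N => if j = 0 then ψ else v)) =
        PiTensorProduct.tprod ℂ w :=
  staged_circuit_output_general N M U i σ hσ ψ v
end

section
/- Let n ≥ 1 and let i be a natural number with i < 2^n. For each k ∈ {0, 1, …, n−1} let d_k = (i / 2^{n−1−k}) mod 2 be the k-th most significant binary digit of i, let p_k = 2^{n−k} · (i / 2^{n−k}) (integer division; p_k is i with its lowest n−k binary digits set to 0), and let τ_k be the permutation of Fin (2^n) that is the transposition exchanging p_k and p_k + 2^{n−1−k} when d_k = 1, and the identity when d_k = 0. Then the composition τ_{n−1} ∘ τ_{n−2} ∘ ⋯ ∘ τ_0 (with τ_0 applied first) maps 0 to i. -/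
/-- `bitd n i k` is the `k`-th most significant binary digit of `i < 2^n`. -/
def bitd (n i k : ℕ) : ℕ := (i / 2 ^ (n - 1 - k)) % 2

/-- `pref n i k` is `i` with its lowest `n - k` binary digits set to `0`,
i.e. `2^(n-k) * (i / 2^(n-k))`. -/
def pref (n i k : ℕ) : ℕ := 2 ^ (n - k) * (i / 2 ^ (n - k))

theorem pref_le (n i k : ℕ) : pref n i k ≤ i := by
  unfold pref
  rw [mul_comm]
  exact Nat.div_mul_le_self _ _

theorem pref_lt (n i k : ℕ) (hi : i < 2 ^ n) : pref n i k < 2 ^ n :=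
  lt_of_le_of_lt (pref_le n i k) hi

theorem pref_add_lt (n i k : ℕ) (hk : k < n) (hi : i < 2 ^ n) :
    pref n i k + 2 ^ (n - 1 - k) < 2 ^ n := by
  have hq : i / 2 ^ (n - k) < 2 ^ k := by
    rw [Nat.div_lt_iff_lt_mul (pow_pos (by norm_num : (0:ℕ) < 2) _)]
    calc i < 2 ^ n := hi
      _ = 2 ^ k * 2 ^ (n - k) := by rw [← pow_add]; congr 1; omega
  have hlt : 2 ^ (n - 1 - k) < 2 ^ (n - k) :=
    Nat.pow_lt_pow_right (by norm_num) (by omega)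
  calc pref n i k + 2 ^ (n - 1 - k)
      < 2 ^ (n - k) * (i / 2 ^ (n - k)) + 2 ^ (n - k) := by unfold pref; omega
    _ = 2 ^ (n - k) * (i / 2 ^ (n - k) + 1) := by ring
    _ ≤ 2 ^ (n - k) * 2 ^ k := Nat.mul_le_mul_left _ (by omega)
    _ = 2 ^ n := by rw [← pow_add]; congr 1; omega

/-- The `k`-th controlled swap of the routing network: the transposition of `Fin (2^n)`
exchanging `pref n i k` and `pref n i k + 2^(n-1-k)` when the `k`-th most significant bit
of `i` is `1`, and the identity when it is `0`. -/
noncomputable def routeSwap (n i : ℕ) (hi : i < 2 ^ n) (k : ℕ) (hk : k < n) :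
    Equiv.Perm (Fin (2 ^ n)) :=
  if bitd n i k = 1 then
    Equiv.swap ⟨pref n i k, pref_lt n i k hi⟩
      ⟨pref n i k + 2 ^ (n - 1 - k), pref_add_lt n i k hk hi⟩
  else 1

/-!
The prefixes `pref n i k` climb from `pref n i 0 = 0` to `pref n i n = i`, each step restoring
one binary digit: `pref n i (k + 1) = pref n i k + bitd n i k * 2^(n-1-k)`. This is exactly what
the `k`-th controlled swap does to register `pref n i k`, so after `k` swaps the data sits in
register `pref n i k`.
-/

lemma pref_zero (n i : ℕ) (hi : i < 2 ^ n) : pref n i 0 = 0 := by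
  simp [pref, Nat.div_eq_of_lt hi]

lemma pref_self (n i : ℕ) : pref n i n = i := by
  simp [pref]

lemma pref_succ (n i k : ℕ) (hk : k < n) :
    pref n i (k + 1) = pref n i k + bitd n i k * 2 ^ (n - 1 - k) := by
  obtain ⟨m, hm⟩ : ∃ m, n - 1 - k = m := ⟨_, rfl⟩
  have hk1 : n - (k + 1) = m := by omega
  have hk0 : n - k = m + 1 := by omega
  have hdiv : i / 2 ^ (m + 1) = i / 2 ^ m / 2 := by
    rw [pow_succ, Nat.div_div_eq_div_mul]
  simp only [pref, bitd, hm, hk1, hk0, hdiv]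
  calc 2 ^ m * (i / 2 ^ m)
      = 2 ^ m * (2 * (i / 2 ^ m / 2) + i / 2 ^ m % 2) := by rw [Nat.div_add_mod]
    _ = 2 ^ (m + 1) * (i / 2 ^ m / 2) + i / 2 ^ m % 2 * 2 ^ m := by ring

lemma routeSwap_apply_pref (n i : ℕ) (hi : i < 2 ^ n) (k : ℕ) (hk : k < n) :
    routeSwap n i hi k hk ⟨pref n i k, pref_lt n i k hi⟩
      = ⟨pref n i (k + 1), pref_lt n i (k + 1) hi⟩ := by
  have hstep := pref_succ n i k hk
  unfold routeSwap
  split_ifs with hbit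
  · rw [hbit, one_mul] at hstep
    simp only [hstep, Equiv.swap_apply_left]
  · have hbit0 : bitd n i k = 0 := (Nat.mod_two_eq_zero_or_one _).resolve_right hbit
    rw [hbit0, zero_mul, add_zero] at hstep
    simp only [hstep, Equiv.Perm.one_apply]

lemma foldl_finRange_mul_apply_of_chain {X : Type*} {n : ℕ} (σ : Fin n → Equiv.Perm X)
    (x : ℕ → X) (hσ : ∀ k : Fin n, σ k (x k) = x (k + 1)) :
    ((List.finRange n).foldl (fun acc k => σ k * acc) 1) (x 0) = x n := by
  induction n with
  | zero => rfl
  | succ n ih =>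
    rw [List.finRange_succ_last, List.foldl_append, List.foldl_map, List.foldl_cons,
      List.foldl_nil, Equiv.Perm.mul_apply, ih (fun k => σ k.castSucc) fun k => hσ k.castSucc]
    exact hσ (Fin.last n)

/-- The cascade of controlled swaps `τ_{n-1} ∘ ⋯ ∘ τ_1 ∘ τ_0` (with `τ_0` applied first),
where `τ_k` swaps `pref n i k` with `pref n i k + 2^(n-1-k)` precisely when the `k`-th most
significant bit of `i` is `1`, routes the data from register `0` to register `i`. -/
theorem routing_swaps_reach (n : ℕ) (i : ℕ) (hi : i < 2 ^ n) :
    ((List.finRange n).foldl (fun acc k => routeSwap n i hi k.val k.isLt * acc) 1)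
        ⟨0, pow_pos (by norm_num) n⟩ = ⟨i, hi⟩ := by
  have hchain := foldl_finRange_mul_apply_of_chain
    (fun k : Fin n => routeSwap n i hi k.val k.isLt) (fun k => ⟨pref n i k, pref_lt n i k hi⟩)
    (fun k => routeSwap_apply_pref n i hi k k.isLt)
  simpa only [pref_zero n i hi, pref_self] using hchain
end

section
/- Let N ≥ 1. For 1 ≤ i ≤ N−1 let s_i denote the transposition of Fin N exchanging i−1 and i. Given a family of booleans b indexed by pairs (k, i) with 1 ≤ i ≤ k ≤ N−1, define the layer permutation L_k(b) = (s_1 if b_{k,1} else id) ∘ (s_2 if b_{k,2} else id) ∘ ⋯ ∘ (s_k if b_{k,k} else id) (with the factor for i = k applied first), and define Π(b) = L_{N−1}(b) ∘ L_{N−2}(b) ∘ ⋯ ∘ L_1(b) (with L_1 applied first). Then the map b ↦ Π(b), from boolean assignments on the N(N−1)/2 switch positions to permutations of Fin N, is surjective: every permutation of Fin N equals Π(b) for some assignment of the switch controls b. -/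
/-- The adjacent transposition `s_i` of `Fin N` exchanging `i - 1` and `i`,
for `1 ≤ i ≤ N - 1` (and the identity for `i` out of this range). -/
def adjSwap (N i : ℕ) : Equiv.Perm (Fin N) :=
  if h : 1 ≤ i ∧ i ≤ N - 1 then
    Equiv.swap ⟨i - 1, by omega⟩ ⟨i, by omega⟩
  else 1

/-- The `k`-th layer of the quantum-switch network with boolean controls `b`:
`L_k(b) = (s_1 if b k 1 else id) ∘ (s_2 if b k 2 else id) ∘ ⋯ ∘ (s_k if b k k else id)`,
the factor for `i = k` being applied first. -/
def switchLayer (N : ℕ) (b : ℕ → ℕ → Bool) (k : ℕ) : Equiv.Perm (Fin N) :=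
  ((List.range' 1 k).map (fun i => if b k i then adjSwap N i else 1)).prod

/-- The full staircase network of `N(N-1)/2` binary-controlled switches:
`Π(b) = L_{N-1}(b) ∘ L_{N-2}(b) ∘ ⋯ ∘ L_1(b)`, with `L_1` applied first. -/
def switchNetwork (N : ℕ) (b : ℕ → ℕ → Bool) : Equiv.Perm (Fin N) :=
  (((List.range' 1 (N - 1)).map (fun k => switchLayer N b k)).reverse).prod


/-!
Induct on the number `m` of layers: the first `m` layers realize every permutation fixing all
points above `m`. Given such a `π` for `m + 1`, let `j = π (m + 1) ≤ m + 1`. Switching on exactly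
the switches `j + 1, …, m + 1` of layer `m + 1` gives the cycle `s_{j+1} ⋯ s_{m+1}`, which
carries `m + 1` down to `j` and fixes everything above `m + 1`; composing its inverse with `π`
leaves a permutation fixing all points above `m`, realized by the first `m` layers.
-/

open Equiv Function

lemma adjSwap_apply_of_lt {N i : ℕ} {x : Fin N} (h : i < x.val) : adjSwap N i x = x := by
  unfold adjSwap
  split
  · exact swap_apply_of_ne_of_ne (Fin.ne_of_val_ne (by simp; omega))
      (Fin.ne_of_val_ne (by simp; omega))
  · rfl

lemma adjSwap_apply_of_val_eq {N i : ℕ} {x : Fin N} (hi : 1 ≤ i) (hx : x.val = i) :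
    (adjSwap N i x).val = i - 1 := by
  obtain ⟨x, hxN⟩ := x
  subst hx
  rw [adjSwap, dif_pos ⟨hi, by omega⟩, swap_apply_right]

lemma switchLayer_apply_of_lt {N k : ℕ} (b : ℕ → ℕ → Bool) {x : Fin N} (h : k < x.val) :
    switchLayer N b k x = x := by
  have hmem : ∀ p ∈ (List.range' 1 k).map (fun i => if b k i then adjSwap N i else 1),
      p ∈ MulAction.stabilizer (Perm (Fin N)) x := by
    simp only [List.mem_map, List.mem_range'_1]
    rintro _ ⟨i, hi, rfl⟩
    split
    · exact adjSwap_apply_of_lt (by omega)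
    · rfl
  exact (Subgroup.list_prod_mem _ hmem :)

lemma switchLayer_congr {N k : ℕ} {b b' : ℕ → ℕ → Bool} (h : b k = b' k) :
    switchLayer N b k = switchLayer N b' k := by
  simp only [switchLayer, h]

lemma switchLayer_threshold_apply {N j : ℕ} (n : ℕ) {x : Fin N} (hx : x.val = j + n) :
    (switchLayer N (fun _ i => decide (j < i)) (j + n) x).val = j := by
  induction n generalizing x with
  | zero =>
    have hoff : switchLayer N (fun _ i => decide (j < i)) j = 1 := by
      refine List.prod_eq_one ?_
      simp only [List.mem_map, List.mem_range'_1]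
      rintro _ ⟨i, hi, rfl⟩
      simp only [decide_eq_true_eq, ite_eq_right_iff]
      omega
    simp [hoff, hx]
  | succ n ih =>
    rw [← add_assoc]
    unfold switchLayer
    rw [List.range'_concat, List.map_append, List.prod_append, List.map_singleton,
      List.prod_singleton, Perm.mul_apply, if_pos (by simp; omega)]
    exact ih (by rw [adjSwap_apply_of_val_eq (by omega) (by omega)]; omega)

/-- The first `m` layers of the network, `L_m(b) ∘ ⋯ ∘ L_1(b)`. -/
def switchNetworkUpTo (N : ℕ) (b : ℕ → ℕ → Bool) (m : ℕ) : Perm (Fin N) :=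
  (((List.range' 1 m).map (switchLayer N b)).reverse).prod

lemma switchNetworkUpTo_succ (N : ℕ) (b : ℕ → ℕ → Bool) (m : ℕ) :
    switchNetworkUpTo N b (m + 1) = switchLayer N b (m + 1) * switchNetworkUpTo N b m := by
  rw [switchNetworkUpTo, List.range'_concat, one_mul, add_comm 1 m, List.map_append,
    List.reverse_append, List.prod_append, List.map_singleton, List.reverse_singleton,
    List.prod_singleton]
  rfl

lemma switchNetworkUpTo_update_of_lt {N m k : ℕ} (b : ℕ → ℕ → Bool) (c : ℕ → Bool)
    (h : m < k) : switchNetworkUpTo N (update b k c) m = switchNetworkUpTo N b m := by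
  induction m with
  | zero => rfl
  | succ m ih =>
    rw [switchNetworkUpTo_succ, switchNetworkUpTo_succ, ih (by omega),
      switchLayer_congr (update_of_ne (by omega) c b)]

lemma exists_switchNetworkUpTo_eq {N : ℕ} (m : ℕ) (hm : m ≤ N - 1) (π : Perm (Fin N))
    (hπ : ∀ x : Fin N, m < x.val → π x = x) : ∃ b, switchNetworkUpTo N b m = π := by
  induction m generalizing π with
  | zero =>
    have hzero : ∀ x ∈ π.support, x.val = 0 := fun x hx =>
      by_contra fun h => Perm.mem_support.mp hx (hπ x (Nat.pos_of_ne_zero h))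
    obtain rfl : π = 1 := Perm.card_support_le_one.mp <| Finset.card_le_one.mpr
      fun x hx y hy => Fin.ext ((hzero x hx).trans (hzero y hy).symm)
    exact ⟨fun _ _ => false, rfl⟩
  | succ m ih =>
    set top : Fin N := ⟨m + 1, by omega⟩
    have hj : (π top).val ≤ m + 1 := by
      by_contra! hgt
      exact hgt.ne (congrArg Fin.val (π.injective (hπ _ hgt))).symm
    obtain ⟨n, hn⟩ := Nat.exists_eq_add_of_le hj
    set c : ℕ → Bool := fun i => decide ((π top).val < i)
    set L := switchLayer N (fun _ => c) (m + 1)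
    have hLtop : L top = π top := by
      have h := switchLayer_threshold_apply (N := N) (j := (π top).val) n (x := top) hn
      rw [← hn] at h
      exact Fin.ext h
    obtain ⟨b, hb⟩ := ih (by omega) (L⁻¹ * π) fun x hx => by
      rw [Perm.mul_apply, Perm.inv_eq_iff_eq]
      rcases (Nat.succ_le_of_lt hx).eq_or_lt with htop | habove
      · rw [show x = top from Fin.ext htop.symm, hLtop]
      · rw [hπ x habove, switchLayer_apply_of_lt _ habove]
    refine ⟨update b (m + 1) c, ?_⟩
    rw [switchNetworkUpTo_succ, switchLayer_congr (b' := fun _ => c) (update_self _ _ b),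
      switchNetworkUpTo_update_of_lt _ _ (Nat.lt_succ_self m), hb, mul_inv_cancel_left]

theorem switchNetwork_surjective_general (N : ℕ) (π : Equiv.Perm (Fin N)) :
    ∃ b : ℕ → ℕ → Bool, switchNetwork N b = π :=
  exists_switchNetworkUpTo_eq (N - 1) le_rfl π fun x hx => absurd x.isLt (by omega)

/-- The staircase network of quantum switches can be programmed to realize every
permutation of `Fin N`: the map `b ↦ Π(b)` from boolean control assignments to
permutations is surjective. -/
theorem switchNetwork_surjective (N : ℕ) (hN : 1 ≤ N) (π : Equiv.Perm (Fin N)) :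
    ∃ b : ℕ → ℕ → Bool, switchNetwork N b = π :=
  switchNetwork_surjective_general N π
end
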